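/- In the decentralized binary hypothesis testing problem on the k-ary tree of depth t with binary message alphabet M = {0,1}, there exists a set of decision rules, each of which is a monotone deterministic likelihood ratio test, that achieves the minimum possible root error probability P(σ_root ≠ s) over all (possibly randomized) decision rule vectors. -/

import Mathlib

/-!
Decentralized binary hypothesis testing on a `k`-ary tree of total depth `t + 1` with a
uniform prior on the state of the world `s ∈ {0,1}` (encoded as `Bool`), binary
symmetric private signals of noise `δ ∈ (0,1/2)` at the leaves, and binary message
alphabet.

We formalize:  there exists a rule vector, each of whose decision rules is a *monotone
deterministic likelihood ratio test*, achieving the minimum possible root error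
probability over all (possibly randomized) rule vectors.
-/

/-- A randomized decision rule ("kernel") from `α` to `β`. -/
def IsKernel {α β : Type} [Fintype β] (K : α → β → ℝ) : Prop :=
  ∀ a, (∀ b, 0 ≤ K a b) ∧ ∑ b, K a b = 1

/-- A (possibly node-dependent, randomized) rule vector on the `k`-ary tree. -/
inductive RuleTree (X M : Type) (k : ℕ) : ℕ → Type
  | leaf (g : X → M → ℝ) : RuleTree X M k 0
  | node {t : ℕ} (f : (Fin k → M) → M → ℝ) (c : Fin k → RuleTree X M k t) :
      RuleTree X M k (t + 1)

/-- All kernels in a rule tree are valid randomized decision rules. -/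
def ValidTree {X M : Type} [Fintype M] {k : ℕ} : {t : ℕ} → RuleTree X M k t → Prop
  | _, .leaf g => IsKernel g
  | _, .node f c => IsKernel f ∧ ∀ i, ValidTree (c i)

/-- Message distribution of the root of a randomized rule tree, when leaves receive
i.i.d. private signals with distribution `p`. -/
noncomputable def msgDist {X M : Type} [Fintype X] [Fintype M] {k : ℕ} (p : X → ℝ) :
    {t : ℕ} → RuleTree X M k t → M → ℝ
  | _, .leaf g, μ => ∑ x, p x * g x μ
  | _, .node f c, μ => ∑ σ : Fin k → M, (∏ i, msgDist p (c i) (σ i)) * f σ μ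

/-- A deterministic (node-dependent) rule vector on the `k`-ary tree. -/
inductive DetTree (X M : Type) (k : ℕ) : ℕ → Type
  | leaf (g : X → M) : DetTree X M k 0
  | node {t : ℕ} (f : (Fin k → M) → M) (c : Fin k → DetTree X M k t) : DetTree X M k (t + 1)

/-- The `k` child subtrees of a deterministic rule tree of positive depth. -/
def DetTree.children {X M : Type} {k t : ℕ} : DetTree X M k (t + 1) → Fin k → DetTree X M k t
  | .node _ c => c

/-- Message distribution of the root of a deterministic rule tree, when leaves receive
i.i.d. private signals with distribution `p`. -/
noncomputable def msgDistD {X M : Type} [Fintype X] [Fintype M] [DecidableEq M] {k : ℕ}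
    (p : X → ℝ) : {t : ℕ} → DetTree X M k t → M → ℝ
  | _, .leaf g, μ => ∑ x, if g x = μ then p x else 0
  | _, .node f c, μ => ∑ σ : Fin k → M, if f σ = μ then ∏ i, msgDistD p (c i) (σ i) else 0

/-- Distribution of a binary private signal given the state of the world `s`. -/
noncomputable def pSig (δ : ℝ) (s : Bool) : Bool → ℝ := fun x => if x = s then 1 - δ else δ

/-- Root error probability of a randomized protocol of total depth `t + 1`
(uniform prior on the state of the world). -/
noncomputable def rootErr {M : Type} [Fintype M] {k : ℕ} (δ : ℝ) (t : ℕ)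
    (h : (Fin k → M) → Bool → ℝ) (c : Fin k → RuleTree Bool M k t) : ℝ :=
  (1 / 2) * (∑ σ : Fin k → M, (∏ i, msgDist (pSig δ false) (c i) (σ i)) * h σ true) +
  (1 / 2) * (∑ σ : Fin k → M, (∏ i, msgDist (pSig δ true) (c i) (σ i)) * h σ false)

/-- Root error probability of a deterministic protocol of total depth `t + 1`. -/
noncomputable def rootErrD {M : Type} [Fintype M] [DecidableEq M] {k : ℕ} (δ : ℝ) (t : ℕ)
    (h : (Fin k → M) → Bool) (c : Fin k → DetTree Bool M k t) : ℝ :=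
  (1 / 2) * (∑ σ : Fin k → M,
      if h σ = true then ∏ i, msgDistD (pSig δ false) (c i) (σ i) else 0) +
  (1 / 2) * (∑ σ : Fin k → M,
      if h σ = false then ∏ i, msgDistD (pSig δ true) (c i) (σ i) else 0)

/-- `f` is a *monotone deterministic likelihood ratio test* with respect to the pair of
(sub)distributions `q₀, q₁` of its input (the restrictions to the input of the two
joint laws "input and `s = 0`", "input and `s = 1`", up to the common prior factor):
there is a threshold `θ` such that the event `{f = 1, L < θ}` has probability zero and
the event `{f = 0, L > θ}` has probability zero, where `L a = q₁ a / q₀ a` is the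
likelihood (posterior-odds) ratio.  The comparisons `L a < θ`, `L a > θ` are written in
the cross-multiplied form `q₁ a < θ * q₀ a`, `θ * q₀ a < q₁ a` (which also handles
`q₀ a = 0`, where `L = ∞`), and "probability zero" for a point `a` means
`q₀ a + q₁ a = 0`. -/
def IsMonoLRT {α : Type} (q₀ q₁ : α → ℝ) (f : α → Bool) : Prop :=
  ∃ θ : ℝ, (∀ a, f a = true → q₁ a < θ * q₀ a → q₀ a + q₁ a = 0) ∧
           (∀ a, f a = false → θ * q₀ a < q₁ a → q₀ a + q₁ a = 0)

/-- Every decision rule in the (deterministic) rule tree is a monotone deterministic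
likelihood ratio test: at a leaf, with respect to the likelihood ratio of the private
signal; at an internal node, with respect to the likelihood ratio of the vector of
messages received from its children (whose joint conditional law, by independence, is
the product of the children's message distributions). -/
def AllMonoLRT {k : ℕ} (δ : ℝ) : {τ : ℕ} → DetTree Bool Bool k τ → Prop
  | _, .leaf g => IsMonoLRT (pSig δ false) (pSig δ true) g
  | _, .node f c =>
      IsMonoLRT (fun σ => ∏ i, msgDistD (pSig δ false) (c i) (σ i))
                (fun σ => ∏ i, msgDistD (pSig δ true) (c i) (σ i)) f ∧
      ∀ i, AllMonoLRT δ (c i)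

/-!
With binary messages a subtree enters the risk `A * P(true | s = 0) + B * P(true | s = 1)` of its
parent only through its own pair `(P(true | s = 0), P(true | s = 1))`, and affinely. Induct on the
depth with the claim `LRTOptimal` (risks with `A ≥ 0`): replace the children one at a time by
optimal trees for the induced risks, flipping a child's message when its induced `A` is negative
(the parent undoes the flip), and then replace the parent's rule by the pointwise minimizer
`σ ↦ [A q₀ σ + B q₁ σ < 0]`, which is a likelihood ratio test. So some tree of monotone tests beats
every randomized rule vector; as there are finitely many deterministic trees, a best tree of
monotone tests beats them all. The root error is `1/2` plus the risk with `A = 1/2`, `B = -1/2`.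
-/

open Finset

section Trees

variable {X M : Type} {k : ℕ}

theorem DetTree.finite [Finite X] [Finite M] : ∀ τ, Finite (DetTree X M k τ)
  | 0 => Finite.of_surjective DetTree.leaf fun D => by cases D; exact ⟨_, rfl⟩
  | τ + 1 =>
    haveI : Finite (DetTree X M k τ) := DetTree.finite τ
    Finite.of_surjective (fun p : ((Fin k → M) → M) × (Fin k → DetTree X M k τ) => .node p.1 p.2)
      fun D => by cases D; exact ⟨(_, _), rfl⟩

instance [Finite X] [Finite M] {τ : ℕ} : Finite (DetTree X M k τ) := DetTree.finite τ

theorem DetTree.nonempty [Nonempty M] : ∀ τ, Nonempty (DetTree X M k τ)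
  | 0 => ⟨.leaf fun _ => Classical.ofNonempty⟩
  | τ + 1 => ⟨.node (fun _ => Classical.ofNonempty) fun _ => (DetTree.nonempty τ).some⟩

theorem validTree_node_iff [Fintype M] {τ : ℕ} {f : (Fin k → M) → M → ℝ}
    {c : Fin k → RuleTree X M k τ} : ValidTree (.node f c) ↔ IsKernel f ∧ ∀ i, ValidTree (c i) :=
  Iff.rfl

def detKernel {α β : Type} [DecidableEq β] (f : α → β) : α → β → ℝ :=
  fun a b => if f a = b then 1 else 0

theorem isKernel_detKernel {α β : Type} [Fintype β] [DecidableEq β] (f : α → β) :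
    IsKernel (detKernel f) :=
  fun a => ⟨fun b => by unfold detKernel; split_ifs <;> norm_num, by simp [detKernel]⟩

def DetTree.toRuleTree [DecidableEq M] : {τ : ℕ} → DetTree X M k τ → RuleTree X M k τ
  | _, .leaf g => .leaf (detKernel g)
  | _, .node f c => .node (detKernel f) fun i => (c i).toRuleTree

theorem validTree_toRuleTree [Fintype M] [DecidableEq M] :
    ∀ {τ : ℕ} (D : DetTree X M k τ), ValidTree D.toRuleTree
  | _, .leaf g => isKernel_detKernel g
  | _, .node f c => ⟨isKernel_detKernel f, fun i => validTree_toRuleTree (c i)⟩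

theorem msgDist_toRuleTree [Fintype X] [Fintype M] [DecidableEq M] (p : X → ℝ) :
    ∀ {τ : ℕ} (D : DetTree X M k τ) (μ : M), msgDist p D.toRuleTree μ = msgDistD p D μ
  | _, .leaf g, μ => by simp [DetTree.toRuleTree, msgDist, msgDistD, detKernel]
  | _, .node f c, μ => by
    simp [DetTree.toRuleTree, msgDist, msgDistD, detKernel, msgDist_toRuleTree p (c _)]

end Trees

section MessageDistribution

variable {X M : Type} [Fintype X] {k τ : ℕ} {p : X → ℝ}

theorem msgDist_nonneg [Fintype M] (hp : ∀ x, 0 ≤ p x) :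
    ∀ {τ : ℕ} {T : RuleTree X M k τ}, ValidTree T → ∀ μ, 0 ≤ msgDist p T μ
  | _, .leaf _, hg, μ => sum_nonneg fun x _ => mul_nonneg (hp x) ((hg x).1 μ)
  | _, .node _ _, hT, μ => sum_nonneg fun σ _ =>
    mul_nonneg (prod_nonneg fun i _ => msgDist_nonneg hp ((validTree_node_iff.1 hT).2 i) _)
      (((validTree_node_iff.1 hT).1 σ).1 μ)

theorem sum_msgDist_eq_one [Fintype M] (hp : ∑ x, p x = 1) :
    ∀ {τ : ℕ} {T : RuleTree X M k τ}, ValidTree T → ∑ μ, msgDist p T μ = 1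
  | _, .leaf g, hg => by
    simp only [msgDist]
    rw [sum_comm]
    simp [← mul_sum, (hg _).2, hp]
  | _, .node f c, hT => by
    obtain ⟨hf, hc⟩ := validTree_node_iff.1 hT
    simp only [msgDist]
    rw [sum_comm]
    simp [← mul_sum, (hf _).2, ← Fintype.prod_sum, sum_msgDist_eq_one hp (hc _)]

theorem msgDist_false (hp : ∑ x, p x = 1) {τ : ℕ} {T : RuleTree X Bool k τ} (hT : ValidTree T) :
    msgDist p T false = 1 - msgDist p T true := by
  rw [← sum_msgDist_eq_one hp hT, Fintype.sum_bool]
  ring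

theorem prod_msgDist_update (p : X → ℝ) [Fintype M] (c : Fin k → RuleTree X M k τ)
    (i : Fin k) (T : RuleTree X M k τ) (σ : Fin k → M) :
    ∏ j, msgDist p (Function.update c i T j) (σ j) =
      msgDist p T (σ i) * ∏ j ∈ univ.erase i, msgDist p (c j) (σ j) := by
  rw [← mul_prod_erase _ _ (mem_univ i), Function.update_self]
  exact congrArg _ (prod_congr rfl fun j hj => by rw [Function.update_of_ne (ne_of_mem_erase hj)])

end MessageDistribution

section BinaryMessages

variable {X : Type} {k τ : ℕ}

def RuleTree.flip : RuleTree X Bool k τ → RuleTree X Bool k τ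
  | .leaf g => .leaf fun x μ => g x !μ
  | .node f c => .node (fun σ μ => f σ !μ) c

theorem IsKernel.comp_not {α : Type} {K : α → Bool → ℝ} (hK : IsKernel K) :
    IsKernel fun a μ => K a !μ :=
  fun a => ⟨fun μ => (hK a).1 _, by
    rw [← (hK a).2, Fintype.sum_bool, Fintype.sum_bool, add_comm]; rfl⟩

theorem ValidTree.flip {T : RuleTree X Bool k τ} (hT : ValidTree T) : ValidTree T.flip := by
  cases T with
  | leaf g => exact hT.comp_not
  | node f c => exact ⟨(validTree_node_iff.1 hT).1.comp_not, (validTree_node_iff.1 hT).2⟩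

def flipAt {ι : Type} [DecidableEq ι] (i : ι) (σ : ι → Bool) : ι → Bool :=
  Function.update σ i !σ i

theorem flipAt_involutive {ι : Type} [DecidableEq ι] (i : ι) : Function.Involutive (flipAt i) :=
  fun σ => by simp [flipAt]

variable [Fintype X]

theorem msgDist_flip (p : X → ℝ) (T : RuleTree X Bool k τ) (μ : Bool) :
    msgDist p T.flip μ = msgDist p T !μ := by
  cases T <;> rfl

theorem msgDist_node_flipAt (p : X → ℝ) (f : (Fin k → Bool) → Bool → ℝ)
    (c : Fin k → RuleTree X Bool k τ) (i : Fin k) (T : RuleTree X Bool k τ) (μ : Bool) :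
    msgDist p (.node (fun σ => f (flipAt i σ)) (Function.update c i T)) μ =
      msgDist p (.node f (Function.update c i T.flip)) μ := by
  have hfactor : ∀ σ j, msgDist p (Function.update c i T j) (flipAt i σ j) =
      msgDist p (Function.update c i T.flip j) (σ j) := by
    intro σ j
    rcases eq_or_ne j i with rfl | hj
    · simp [flipAt, msgDist_flip]
    · simp [flipAt, Function.update_of_ne hj]
  simp only [msgDist]
  rw [← Equiv.sum_comp (flipAt_involutive i).toPerm]
  simp only [Function.Involutive.coe_toPerm, flipAt_involutive i _, hfactor]

theorem exists_msgDist_node_update_eq {p : X → ℝ} (hp : ∑ x, p x = 1)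
    (f : (Fin k → Bool) → Bool → ℝ) (c : Fin k → RuleTree X Bool k τ) (i : Fin k) :
    ∃ a b : ℝ, ∀ T, ValidTree T →
      msgDist p (.node f (Function.update c i T)) true = a + b * msgDist p T true := by
  set R := fun σ : Fin k → Bool => (∏ j ∈ univ.erase i, msgDist p (c j) (σ j)) * f σ true
  refine ⟨∑ σ, if σ i then 0 else R σ, ∑ σ, if σ i then R σ else -R σ, fun T hT => ?_⟩
  simp only [msgDist, prod_msgDist_update]
  rw [sum_mul, ← sum_add_distrib]
  refine sum_congr rfl fun σ _ => ?_
  cases σ i <;> simp [R, msgDist_false hp hT] <;> ring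

end BinaryMessages

section Risk

variable {X : Type} [Fintype X] {k τ : ℕ} (p₀ p₁ : X → ℝ)

noncomputable def RuleTree.risk (A B : ℝ) (T : RuleTree X Bool k τ) : ℝ :=
  A * msgDist p₀ T true + B * msgDist p₁ T true

theorem risk_neg (A B : ℝ) (T : RuleTree X Bool k τ) :
    T.risk p₀ p₁ (-A) (-B) = -T.risk p₀ p₁ A B := by
  unfold RuleTree.risk; ring

theorem risk_leaf (A B : ℝ) (g : X → Bool → ℝ) :
    (RuleTree.leaf (k := k) g).risk p₀ p₁ A B = ∑ x, (A * p₀ x + B * p₁ x) * g x true := by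
  simp only [RuleTree.risk, msgDist, mul_sum, ← sum_add_distrib]
  exact sum_congr rfl fun x _ => by ring

theorem risk_node (A B : ℝ) (f : (Fin k → Bool) → Bool → ℝ) (c : Fin k → RuleTree X Bool k τ) :
    (RuleTree.node f c).risk p₀ p₁ A B =
      ∑ σ, (A * ∏ i, msgDist p₀ (c i) (σ i) + B * ∏ i, msgDist p₁ (c i) (σ i)) * f σ true := by
  simp only [RuleTree.risk, msgDist, mul_sum, ← sum_add_distrib]
  exact sum_congr rfl fun σ _ => by ring

theorem risk_node_flipAt (A B : ℝ) (f : (Fin k → Bool) → Bool → ℝ)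
    (c : Fin k → RuleTree X Bool k τ) (i : Fin k) (T : RuleTree X Bool k τ) :
    (RuleTree.node (fun σ => f (flipAt i σ)) (Function.update c i T)).risk p₀ p₁ A B =
      (RuleTree.node f (Function.update c i T.flip)).risk p₀ p₁ A B := by
  simp only [RuleTree.risk, msgDist_node_flipAt]

variable {p₀ p₁}

theorem risk_flip (hp₀ : ∑ x, p₀ x = 1) (hp₁ : ∑ x, p₁ x = 1) (A B : ℝ)
    {T : RuleTree X Bool k τ} (hT : ValidTree T) :
    T.flip.risk p₀ p₁ A B = A + B - T.risk p₀ p₁ A B := by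
  simp only [RuleTree.risk, msgDist_flip, Bool.not_true, msgDist_false hp₀ hT,
    msgDist_false hp₁ hT]
  ring

theorem exists_risk_node_update_eq (hp₀ : ∑ x, p₀ x = 1) (hp₁ : ∑ x, p₁ x = 1) (A B : ℝ)
    (f : (Fin k → Bool) → Bool → ℝ) (c : Fin k → RuleTree X Bool k τ) (i : Fin k) :
    ∃ C a b : ℝ, ∀ T, ValidTree T →
      (RuleTree.node f (Function.update c i T)).risk p₀ p₁ A B = C + T.risk p₀ p₁ a b := by
  obtain ⟨a₀, b₀, h₀⟩ := exists_msgDist_node_update_eq hp₀ f c i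
  obtain ⟨a₁, b₁, h₁⟩ := exists_msgDist_node_update_eq hp₁ f c i
  refine ⟨A * a₀ + B * a₁, A * b₀, B * b₁, fun T hT => ?_⟩
  simp only [RuleTree.risk, h₀ T hT, h₁ T hT]
  ring

end Risk

section Thresholds

variable {α : Type}

theorem isMonoLRT_decide_lt {q₀ q₁ : α → ℝ} {A C : ℝ} (B : ℝ) (h₀ : ∀ a, 0 ≤ q₀ a)
    (h₁ : ∀ a, 0 ≤ q₁ a) (hC : ∀ a, q₁ a ≤ C * q₀ a) (hA : 0 ≤ A) :
    IsMonoLRT q₀ q₁ fun a => decide (A * q₀ a + B * q₁ a < 0) := by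
  rcases lt_or_ge B 0 with hB | hB
  · refine ⟨A / -B, fun a ha hlt => ?_, fun a ha hlt => ?_⟩ <;>
      rw [div_mul_eq_mul_div] at hlt <;> simp only [decide_eq_true_eq, decide_eq_false_iff_not,
        not_lt] at ha <;> exfalso
    · rw [lt_div_iff₀ (neg_pos.2 hB)] at hlt; linarith
    · rw [div_lt_iff₀ (neg_pos.2 hB)] at hlt; linarith
  · -- for `B ≥ 0` the test never fires, and `C` bounds the likelihood ratio
    refine ⟨C, fun a ha _ => ?_, fun a _ hlt => absurd (hC a) (not_le.2 hlt)⟩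
    simp only [decide_eq_true_eq] at ha
    nlinarith [mul_nonneg hA (h₀ a), mul_nonneg hB (h₁ a)]

theorem sum_mul_detKernel_decide_le [Fintype α] {K : α → Bool → ℝ} (hK : IsKernel K)
    (w : α → ℝ) :
    ∑ a, w a * detKernel (fun a => decide (w a < 0)) a true ≤ ∑ a, w a * K a true := by
  refine sum_le_sum fun a _ => ?_
  have hsum : K a true + K a false = 1 := by rw [← (hK a).2, Fintype.sum_bool]
  have h₀ := (hK a).1 true
  have h₁ := (hK a).1 false
  by_cases hw : w a < 0 <;> simp [detKernel, hw] <;> nlinarith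

theorem exists_le_mul_of_pos [Finite α] {p : α → ℝ} (hp : ∀ a, 0 < p a) (q : α → ℝ) :
    ∃ C, ∀ a, q a ≤ C * p a := by
  obtain ⟨C, hC⟩ := (Set.finite_range fun a => q a / p a).bddAbove
  exact ⟨C, fun a => (div_le_iff₀ (hp a)).1 (hC ⟨a, rfl⟩)⟩

theorem exists_prod_le_mul_prod {ι β : Type} [Fintype ι] {a b : ι → β → ℝ}
    (ha : ∀ i μ, 0 ≤ a i μ) (h : ∀ i, ∃ C, ∀ μ, a i μ ≤ C * b i μ) :
    ∃ C, ∀ σ : ι → β, ∏ i, a i (σ i) ≤ C * ∏ i, b i (σ i) := by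
  choose C hC using h
  exact ⟨∏ i, C i, fun σ =>
    (prod_le_prod (fun i _ => ha i _) fun i _ => hC i _).trans_eq prod_mul_distrib⟩

theorem sum_mul_le_mul_sum_mul [Fintype α] {u v K : α → ℝ} {C : ℝ} (hK : ∀ a, 0 ≤ K a)
    (h : ∀ a, u a ≤ C * v a) : ∑ a, u a * K a ≤ C * ∑ a, v a * K a := by
  rw [mul_sum]
  exact sum_le_sum fun a _ => by rw [← mul_assoc]; exact mul_le_mul_of_nonneg_right (h a) (hK a)

end Thresholds

section Domination

variable {X M : Type} [Fintype X] [Fintype M] {k : ℕ} {p q : X → ℝ} {C : ℝ}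

theorem exists_msgDist_le_mul (hq : ∀ x, 0 ≤ q x) (hC : ∀ x, q x ≤ C * p x) :
    ∀ {τ : ℕ} {T : RuleTree X M k τ}, ValidTree T → ∃ C', ∀ μ, msgDist q T μ ≤ C' * msgDist p T μ
  | _, .leaf _, hg => ⟨C, fun μ => sum_mul_le_mul_sum_mul (fun x => (hg x).1 μ) hC⟩
  | _, .node _ c, hT => by
    obtain ⟨hf, hc⟩ := validTree_node_iff.1 hT
    obtain ⟨C', hC'⟩ := exists_prod_le_mul_prod (a := fun i => msgDist q (c i))
      (fun i => msgDist_nonneg hq (hc i)) fun i => exists_msgDist_le_mul hq hC (hc i)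
    exact ⟨C', fun μ => sum_mul_le_mul_sum_mul (fun σ => (hf σ).1 μ) hC'⟩

end Domination

section Optimality

variable {k τ : ℕ} {δ : ℝ}

theorem pSig_pos (hδ₀ : 0 < δ) (hδ₁ : δ < 1) (s x : Bool) : 0 < pSig δ s x := by
  unfold pSig; split <;> linarith

theorem sum_pSig (δ : ℝ) (s : Bool) : ∑ x, pSig δ s x = 1 := by
  cases s <;> simp [pSig]

theorem exists_prod_msgDistD_le_mul (hδ₀ : 0 < δ) (hδ₁ : δ < 1)
    (d : Fin k → DetTree Bool Bool k τ) : ∃ C, ∀ σ : Fin k → Bool,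
      ∏ i, msgDistD (pSig δ true) (d i) (σ i) ≤ C * ∏ i, msgDistD (pSig δ false) (d i) (σ i) := by
  obtain ⟨C, hC⟩ := exists_le_mul_of_pos (pSig_pos hδ₀ hδ₁ false) (pSig δ true)
  simp only [← msgDist_toRuleTree]
  exact exists_prod_le_mul_prod
    (fun i => msgDist_nonneg (fun x => (pSig_pos hδ₀ hδ₁ true x).le) (validTree_toRuleTree _))
    fun i => exists_msgDist_le_mul (fun x => (pSig_pos hδ₀ hδ₁ true x).le) hC
      (validTree_toRuleTree _)

def LRTOptimal (δ : ℝ) (k τ : ℕ) : Prop :=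
  ∀ T : RuleTree Bool Bool k τ, ValidTree T → ∀ A B : ℝ, 0 ≤ A →
    ∃ D : DetTree Bool Bool k τ, AllMonoLRT δ D ∧
      D.toRuleTree.risk (pSig δ false) (pSig δ true) A B ≤
        T.risk (pSig δ false) (pSig δ true) A B

local notation "risk" => RuleTree.risk (pSig δ false) (pSig δ true)

theorem exists_allMonoLRT_leaf_risk_le (hδ₀ : 0 < δ) (hδ₁ : δ < 1) {g : Bool → Bool → ℝ}
    (hg : IsKernel g) {A : ℝ} (B : ℝ) (hA : 0 ≤ A) :
    ∃ D : DetTree Bool Bool k 0, AllMonoLRT δ D ∧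
      risk A B D.toRuleTree ≤ risk A B (RuleTree.leaf (k := k) g) := by
  obtain ⟨C, hC⟩ := exists_le_mul_of_pos (pSig_pos hδ₀ hδ₁ false) (pSig δ true)
  refine ⟨DetTree.leaf fun x => decide (A * pSig δ false x + B * pSig δ true x < 0),
    isMonoLRT_decide_lt B (fun x => (pSig_pos hδ₀ hδ₁ false x).le)
      (fun x => (pSig_pos hδ₀ hδ₁ true x).le) hC hA, ?_⟩
  rw [DetTree.toRuleTree, risk_leaf, risk_leaf]
  exact sum_mul_detKernel_decide_le hg _

theorem exists_allMonoLRT_node_risk_le (hδ₀ : 0 < δ) (hδ₁ : δ < 1)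
    {f : (Fin k → Bool) → Bool → ℝ} (hf : IsKernel f) (d : Fin k → DetTree Bool Bool k τ)
    (hd : ∀ i, AllMonoLRT δ (d i)) {A : ℝ} (B : ℝ) (hA : 0 ≤ A) :
    ∃ D : DetTree Bool Bool k (τ + 1), AllMonoLRT δ D ∧
      risk A B D.toRuleTree ≤ risk A B (.node f fun i => (d i).toRuleTree) := by
  set q₀ := fun σ : Fin k → Bool => ∏ i, msgDistD (pSig δ false) (d i) (σ i)
  set q₁ := fun σ : Fin k → Bool => ∏ i, msgDistD (pSig δ true) (d i) (σ i)
  obtain ⟨C, hC⟩ := exists_prod_msgDistD_le_mul hδ₀ hδ₁ d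
  have hq₀ : ∀ σ, 0 ≤ q₀ σ := fun σ => prod_nonneg fun i _ =>
    (msgDist_toRuleTree _ _ _).symm.trans_ge
      (msgDist_nonneg (fun x => (pSig_pos hδ₀ hδ₁ false x).le) (validTree_toRuleTree _) _)
  have hq₁ : ∀ σ, 0 ≤ q₁ σ := fun σ => prod_nonneg fun i _ =>
    (msgDist_toRuleTree _ _ _).symm.trans_ge
      (msgDist_nonneg (fun x => (pSig_pos hδ₀ hδ₁ true x).le) (validTree_toRuleTree _) _)
  refine ⟨.node (fun σ => decide (A * q₀ σ + B * q₁ σ < 0)) d,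
    ⟨isMonoLRT_decide_lt B hq₀ hq₁ hC hA, hd⟩, ?_⟩
  rw [DetTree.toRuleTree, risk_node, risk_node]
  simp only [msgDist_toRuleTree]
  exact sum_mul_detKernel_decide_le hf _

theorem exists_allMonoLRT_child_risk_le (IH : LRTOptimal δ k τ) (A B : ℝ)
    {f : (Fin k → Bool) → Bool → ℝ} (hf : IsKernel f) {c : Fin k → RuleTree Bool Bool k τ}
    (hc : ∀ i, ValidTree (c i)) (i : Fin k) :
    ∃ f', IsKernel f' ∧ ∃ D : DetTree Bool Bool k τ, AllMonoLRT δ D ∧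
      risk A B (.node f' (Function.update c i D.toRuleTree)) ≤ risk A B (.node f c) := by
  obtain ⟨C, a, b, hrisk⟩ :=
    exists_risk_node_update_eq (sum_pSig δ false) (sum_pSig δ true) A B f c i
  have hci : risk A B (.node f c) = C + risk a b (c i) := by
    rw [← hrisk _ (hc i), Function.update_eq_self]
  rcases le_or_gt 0 a with ha | ha
  · obtain ⟨D, hD, hle⟩ := IH (c i) (hc i) a b ha
    exact ⟨f, hf, D, hD, by rw [hrisk _ (validTree_toRuleTree D), hci]; linarith⟩
  · -- a negative weight on child `i` is made positive by flipping its message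
    obtain ⟨D, hD, hle⟩ := IH (c i).flip (hc i).flip (-a) (-b) (by linarith)
    refine ⟨fun σ => f (flipAt i σ), fun σ => hf _, D, hD, ?_⟩
    rw [risk_node_flipAt, hrisk _ (validTree_toRuleTree D).flip, hci,
      risk_flip (sum_pSig δ false) (sum_pSig δ true) _ _ (validTree_toRuleTree D)]
    rw [risk_neg, risk_neg, risk_flip (sum_pSig δ false) (sum_pSig δ true) _ _ (hc i)] at hle
    linarith

theorem exists_allMonoLRT_children_risk_le (IH : LRTOptimal δ k τ) (A B : ℝ)
    {f : (Fin k → Bool) → Bool → ℝ} (hf : IsKernel f) {c : Fin k → RuleTree Bool Bool k τ}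
    (hc : ∀ i, ValidTree (c i)) :
    ∃ f', IsKernel f' ∧ ∃ d : Fin k → DetTree Bool Bool k τ, (∀ i, AllMonoLRT δ (d i)) ∧
      risk A B (.node f' fun i => (d i).toRuleTree) ≤ risk A B (.node f c) := by
  suffices h : ∀ s : Finset (Fin k), ∃ f', IsKernel f' ∧ ∃ c' : Fin k → RuleTree Bool Bool k τ,
      (∀ i, ValidTree (c' i)) ∧ (∀ i ∈ s, ∃ D, AllMonoLRT δ D ∧ c' i = D.toRuleTree) ∧
      risk A B (.node f' c') ≤ risk A B (.node f c) by
    obtain ⟨f', hf', c', -, hdet, hle⟩ := h univ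
    choose d hd hc' using fun i => hdet i (mem_univ i)
    exact ⟨f', hf', d, hd, (funext hc').symm ▸ hle⟩
  intro s
  induction s using Finset.induction_on with
  | empty => exact ⟨f, hf, c, hc, by simp, le_rfl⟩
  | insert i s _ ih =>
    obtain ⟨f₁, hf₁, c₁, hc₁, hdet₁, hle₁⟩ := ih
    obtain ⟨f₂, hf₂, D, hD, hle₂⟩ := exists_allMonoLRT_child_risk_le IH A B hf₁ hc₁ i
    refine ⟨f₂, hf₂, Function.update c₁ i D.toRuleTree, fun j => ?_, fun j hj => ?_,
      hle₂.trans hle₁⟩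
    · rcases eq_or_ne j i with rfl | hji
      · simpa using validTree_toRuleTree D
      · simpa [hji] using hc₁ j
    · rcases eq_or_ne j i with rfl | hji
      · exact ⟨D, hD, by simp⟩
      · simpa [hji] using hdet₁ j ((mem_insert.1 hj).resolve_left hji)

theorem lrtOptimal (hδ₀ : 0 < δ) (hδ₁ : δ < 1) : ∀ τ, LRTOptimal δ k τ
  | 0, .leaf _, hg, _, B, hA => exists_allMonoLRT_leaf_risk_le hδ₀ hδ₁ hg B hA
  | τ + 1, .node _ _, hT, A, B, hA => by
    obtain ⟨hf, hc⟩ := validTree_node_iff.1 hT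
    obtain ⟨f', hf', d, hd, hle⟩ :=
      exists_allMonoLRT_children_risk_le (lrtOptimal hδ₀ hδ₁ τ) A B hf hc
    obtain ⟨D, hD, hDle⟩ := exists_allMonoLRT_node_risk_le hδ₀ hδ₁ hf' d hd B hA
    exact ⟨D, hD, hDle.trans hle⟩

end Optimality

section RootError

variable {k t : ℕ} {δ : ℝ}

theorem rootErrD_eq_rootErr {M : Type} [Fintype M] [DecidableEq M] (h : (Fin k → M) → Bool)
    (c : Fin k → DetTree Bool M k t) :
    rootErrD δ t h c = rootErr δ t (detKernel h) fun i => (c i).toRuleTree := by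
  simp [rootErrD, rootErr, msgDist_toRuleTree, detKernel]

theorem rootErr_eq_risk {h : (Fin k → Bool) → Bool → ℝ} (hh : IsKernel h)
    {c : Fin k → RuleTree Bool Bool k t} (hc : ∀ i, ValidTree (c i)) :
    rootErr δ t h c =
      1 / 2 + (RuleTree.node h c).risk (pSig δ false) (pSig δ true) (1 / 2) (-1 / 2) := by
  have hfalse := msgDist_false (sum_pSig δ true) (validTree_node_iff.2 ⟨hh, hc⟩)
  simp only [msgDist] at hfalse
  simp only [rootErr, RuleTree.risk, msgDist, hfalse]
  ring

end RootError

/-- **Optimality of monotone deterministic likelihood ratio tests** (binary messages).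
For every `δ ∈ (0,1/2)`, every `k` and every total depth `t + 1`, there is a rule
vector, each of whose rules (leaf rules, internal rules, and the root rule) is a
monotone deterministic likelihood ratio test, achieving the minimum possible root
error probability `P(σ_root ≠ s)` over all valid (possibly randomized) rule vectors. -/
theorem exists_optimal_monotone_LRT_rules
    (δ : ℝ) (hδ₀ : 0 < δ) (hδ₁ : δ < 1 / 2) (k t : ℕ) :
    ∃ (h : (Fin k → Bool) → Bool) (c : Fin k → DetTree Bool Bool k t),
      (∀ (h' : (Fin k → Bool) → Bool → ℝ) (c' : Fin k → RuleTree Bool Bool k t),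
        IsKernel h' → (∀ i, ValidTree (c' i)) →
        rootErrD δ t h c ≤ rootErr δ t h' c') ∧
      (∀ i, AllMonoLRT δ (c i)) ∧
      IsMonoLRT (fun σ => ∏ i, msgDistD (pSig δ false) (c i) (σ i))
                (fun σ => ∏ i, msgDistD (pSig δ true) (c i) (σ i)) h := by
  have hopt := lrtOptimal (k := k) hδ₀ (by linarith) (t + 1)
  let risk (D : {D : DetTree Bool Bool k (t + 1) // AllMonoLRT δ D}) : ℝ :=
    D.1.toRuleTree.risk (pSig δ false) (pSig δ true) (1 / 2) (-1 / 2)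
  have : Nonempty {D : DetTree Bool Bool k (t + 1) // AllMonoLRT δ D} :=
    let ⟨D₀⟩ := DetTree.nonempty (X := Bool) (M := Bool) (k := k) (t + 1)
    let ⟨D, hD, _⟩ := hopt _ (validTree_toRuleTree D₀) (1 / 2) (-1 / 2) (by norm_num)
    ⟨⟨D, hD⟩⟩
  obtain ⟨⟨D, hD⟩, hmin⟩ := Finite.exists_min risk
  cases D with | node h c =>
  refine ⟨h, c, fun h' c' hh' hc' => ?_, hD.2, hD.1⟩
  obtain ⟨D, hD', hle⟩ := hopt _ (validTree_node_iff.2 ⟨hh', hc'⟩) (1 / 2) (-1 / 2) (by norm_num)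
  rw [rootErrD_eq_rootErr, rootErr_eq_risk (isKernel_detKernel h) fun i => validTree_toRuleTree _,
    rootErr_eq_risk hh' hc']
  gcongr
  exact (hmin ⟨D, hD'⟩).trans hle
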